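/- arXiv:1406.2588 — 3 statements merged into one kernel-verified Lean document; each statement's English description precedes it below -/
import Mathlib

section
/- For each real number ε > 0 and each integer c ≥ 1, there exist a natural number r and a finite set X ⊆ (ZMod 2)^r with 0 ∉ X, X spanning (ZMod 2)^r, X triangle-free, |X| ≥ (1/4 − ε)·2^r, and critical number χ(X) = c. -/
/-!
Take `X = light ∪ heavy` in `𝔽₂^(m+1)`, where `light` consists of the vectors with first
coordinate `1` and weight strictly between `2d` and `(m + 1 - d) / 2`, and `heavy` of the vectors
with at most `d` zero coordinates. A sum of two light vectors has first coordinate `0` and weight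
below `m + 1 - d`, a sum of two heavy vectors has weight at most `2d`; as two vertices of any
triangle lie in the same part, `X` is triangle-free. The vectors vanishing on `d + 1` coordinates,
the first among them, form a subspace of codimension `d + 1` avoiding `X`, while a greedy argument
puts into every subspace of codimension `t` a vector with at most `t` zero coordinates; hence
`χ(X) = d + 1`. Finally, by the symmetry `v ↦ v + 1` of weights, the light vectors number
`2^m / 2` up to `O(d)` binomial coefficients `C(m, m/2) = O(2^m / √m)`, which is
`(1/4 - ε) 2^(m+1)` for large `m`.
-/

/-- `X` is triangle-free: no three pairwise distinct elements of `X` sum to zero. -/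
def TriangleFree {n : ℕ} (X : Set (Fin n → ZMod 2)) : Prop :=
  ∀ x ∈ X, ∀ y ∈ X, ∀ z ∈ X, x ≠ y → y ≠ z → x ≠ z → x + y + z ≠ 0

/-- The critical number of `X ⊆ (ZMod 2)^n`: the least `c` such that some linear subspace
of codimension `c` is disjoint from `X`. -/
noncomputable def critNum {n : ℕ} (X : Set (Fin n → ZMod 2)) : ℕ :=
  sInf {c : ℕ | ∃ W : Submodule (ZMod 2) (Fin n → ZMod 2),
    Module.finrank (ZMod 2) W + c = n ∧ ∀ x ∈ X, x ∉ W}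


open Finset Module

section Hamming

variable {ι : Type*} [Fintype ι]

theorem hammingNorm_add_le {β : Type*} [AddZeroClass β] [DecidableEq β] (x y : ι → β) :
    hammingNorm (x + y) ≤ hammingNorm x + hammingNorm y := by
  classical
  refine (card_le_card fun i hi => ?_).trans (card_union_le _ _)
  simp only [mem_filter, mem_univ, true_and, mem_union, Pi.add_apply] at hi ⊢
  by_contra! h
  simp [h.1, h.2] at hi

theorem hammingNorm_single_le {β : Type*} [Zero β] [DecidableEq β] [DecidableEq ι] (j : ι)
    (b : β) : hammingNorm (Pi.single (M := fun _ => β) j b) ≤ 1 := by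
  refine (card_le_card fun i hi => ?_).trans (card_singleton j).le
  by_contra h
  simp_all [Pi.single_apply]

theorem hammingNorm_add_card_le {β : Type*} [Zero β] [DecidableEq β] {x : ι → β} {S : Finset ι}
    (hx : ∀ i ∈ S, x i = 0) : hammingNorm x + #S ≤ Fintype.card ι := by
  classical
  rw [← card_compl_add_card S]
  refine Nat.add_le_add_right (card_le_card fun i hi => mem_compl.2 fun hiS => ?_) _
  simp_all

theorem hammingNorm_one {β : Type*} [Zero β] [One β] [NeZero (1 : β)] [DecidableEq β] :
    hammingNorm (1 : ι → β) = Fintype.card ι := by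
  simp [hammingNorm]

theorem hammingNorm_sum_single {R : Type*} [AddCommMonoidWithOne R] [NeZero (1 : R)]
    [DecidableEq R] [DecidableEq ι] (T : Finset ι) :
    hammingNorm (∑ j ∈ T, Pi.single j (1 : R)) = #T := by
  unfold hammingNorm
  congr 1
  ext i
  simp [Finset.sum_apply, Pi.single_apply]

theorem hammingNorm_add_one (x : ι → ZMod 2) :
    hammingNorm (x + 1) + hammingNorm x = Fintype.card ι := by
  have h : ∀ a : ZMod 2, a + 1 ≠ 0 ↔ ¬ a ≠ 0 := by decide
  simp only [hammingNorm, Pi.add_apply, Pi.one_apply, h]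
  exact (add_comm _ _).trans (card_filter_add_card_filter_not _)

theorem hammingNorm_add_add_le (x y : ι → ZMod 2) :
    hammingNorm (x + y) + hammingNorm x + hammingNorm y ≤ 2 * Fintype.card ι := by
  have h := hammingNorm_add_le (x + 1) (y + 1)
  rw [add_add_add_comm, ZModModule.add_self, add_zero] at h
  have := hammingNorm_add_one x
  have := hammingNorm_add_one y
  omega

theorem hammingNorm_cons_one {m : ℕ} (v : Fin m → ZMod 2) :
    hammingNorm (Fin.cons 1 v : Fin (m + 1) → ZMod 2) = hammingNorm v + 1 := by
  simp [hammingNorm, card_filter, Fin.sum_univ_succ, add_comm]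

end Hamming

section WeightCount

variable {ι : Type*} [Fintype ι] [DecidableEq ι]

theorem card_filter_hammingNorm_eq (j : ℕ) :
    #{v : ι → ZMod 2 | hammingNorm v = j} = (Fintype.card ι).choose j := by
  rw [← card_univ, ← card_powersetCard]
  refine card_nbij' (fun v => ({i | v i ≠ 0} : Finset ι)) (fun T => ∑ i ∈ T, Pi.single i 1)
    ?_ ?_ ?_ ?_
  · intro v hv
    simpa [mem_powersetCard, hammingNorm] using hv
  · intro T hT
    simp only [mem_coe, mem_powersetCard, mem_filter, mem_univ, true_and] at hT ⊢
    rw [hammingNorm_sum_single, hT.2]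
  · intro v _
    have h : ∀ a : ZMod 2, (if a ≠ 0 then 1 else 0) = a := by decide
    ext i
    simpa [Finset.sum_apply, Pi.single_apply] using h (v i)
  · intro T _
    ext i
    simp [Finset.sum_apply, Pi.single_apply]

theorem card_filter_hammingNorm_le (P : ℕ → Prop) [DecidablePred P] :
    #{v : ι → ZMod 2 | P (hammingNorm v)} ≤
      #{j ∈ range (Fintype.card ι + 1) | P j} * (Fintype.card ι).choose (Fintype.card ι / 2) := by
  rw [card_eq_sum_card_fiberwise (f := hammingNorm) (t := {j ∈ range (Fintype.card ι + 1) | P j})]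
  · refine sum_le_card_nsmul _ _ _ fun j _ => ?_
    calc #{v ∈ {v : ι → ZMod 2 | P (hammingNorm v)} | hammingNorm v = j}
        ≤ #{v : ι → ZMod 2 | hammingNorm v = j} :=
          card_le_card (filter_subset_filter _ (filter_subset _ _))
      _ ≤ _ := (card_filter_hammingNorm_eq j).trans_le (Nat.choose_le_middle j _)
  · intro v hv
    simp only [coe_filter, mem_univ, true_and, Set.mem_ofPred_eq, mem_range] at hv ⊢
    exact ⟨Nat.lt_succ_of_le hammingNorm_le_card_fintype, hv⟩

theorem card_filter_hammingNorm_lt_le (k : ℕ) :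
    #{v : ι → ZMod 2 | hammingNorm v < k} ≤ k * (Fintype.card ι).choose (Fintype.card ι / 2) := by
  refine (card_filter_hammingNorm_le (· < k)).trans (Nat.mul_le_mul_right _ ?_)
  calc #{j ∈ range (Fintype.card ι + 1) | j < k} ≤ #(range k) :=
        card_le_card fun j => by simp
    _ = k := card_range k

theorem card_filter_le_two_mul_hammingNorm (s : ℕ) :
    #{v : ι → ZMod 2 | Fintype.card ι + s ≤ 2 * hammingNorm v} =
      #{v : ι → ZMod 2 | 2 * hammingNorm v + s ≤ Fintype.card ι} := by
  refine card_equiv (Equiv.addRight 1) fun v => ?_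
  have := hammingNorm_add_one v
  simp only [mem_filter, mem_univ, true_and, Equiv.coe_addRight]
  omega

/-- Complementation `v ↦ v + 1` swaps the two tails `2‖v‖ + s ≤ n` and `n + s ≤ 2‖v‖`, and the
band between them contains at most `s` weights. -/
theorem two_pow_le_two_mul_card_lower_tail_add (s : ℕ) :
    2 ^ Fintype.card ι ≤ 2 * #{v : ι → ZMod 2 | 2 * hammingNorm v + s ≤ Fintype.card ι} +
      s * (Fintype.card ι).choose (Fintype.card ι / 2) := by
  set n := Fintype.card ι with hn
  have hmiddle : #{v : ι → ZMod 2 | n < 2 * hammingNorm v + s ∧ 2 * hammingNorm v < n + s} ≤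
      s * n.choose (n / 2) := by
    refine (card_filter_hammingNorm_le fun j => n < 2 * j + s ∧ 2 * j < n + s).trans
      (Nat.mul_le_mul_right _ ?_)
    calc #{j ∈ range (n + 1) | n < 2 * j + s ∧ 2 * j < n + s}
        ≤ #(Ico ((n + 1 - s) / 2) ((n + 1 - s) / 2 + s)) :=
          card_le_card fun j => by simp only [mem_filter, mem_range, mem_Ico]; omega
      _ = s := by simp
  calc 2 ^ n = #(univ : Finset (ι → ZMod 2)) := by simp [n]
    _ ≤ #{v : ι → ZMod 2 | 2 * hammingNorm v + s ≤ n} +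
          #{v : ι → ZMod 2 | n + s ≤ 2 * hammingNorm v} +
          #{v : ι → ZMod 2 | n < 2 * hammingNorm v + s ∧ 2 * hammingNorm v < n + s} := by
      refine (card_le_card fun v _ => ?_).trans
        ((card_union_le _ _).trans (Nat.add_le_add_right (card_union_le _ _) _))
      simp only [mem_union, mem_filter, mem_univ, true_and]
      omega
    _ ≤ _ := by rw [card_filter_le_two_mul_hammingNorm, ← hn]; omega

theorem two_pow_le_two_mul_card_band (d : ℕ) :
    2 ^ Fintype.card ι ≤
      2 * #{v : ι → ZMod 2 | 2 * d ≤ hammingNorm v ∧ 2 * hammingNorm v + d + 2 ≤ Fintype.card ι} +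
      (5 * d + 2) * (Fintype.card ι).choose (Fintype.card ι / 2) := by
  have hsplit : #{v : ι → ZMod 2 | 2 * hammingNorm v + (d + 2) ≤ Fintype.card ι} ≤
      #{v : ι → ZMod 2 | 2 * d ≤ hammingNorm v ∧ 2 * hammingNorm v + d + 2 ≤ Fintype.card ι} +
        #{v : ι → ZMod 2 | hammingNorm v < 2 * d} := by
    refine (card_le_card fun v => ?_).trans (card_union_le _ _)
    simp only [mem_union, mem_filter, mem_univ, true_and]
    omega
  have := two_pow_le_two_mul_card_lower_tail_add (ι := ι) (d + 2)
  have := card_filter_hammingNorm_lt_le (ι := ι) (2 * d)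
  linarith

end WeightCount

theorem Nat.centralBinom_sq_mul_le (n : ℕ) : n.centralBinom ^ 2 * (2 * n + 1) ≤ 16 ^ n := by
  induction n with
  | zero => simp
  | succ n ih =>
    refine Nat.le_of_mul_le_mul_right ?_ (by positivity : 0 < (n + 1) ^ 2 * (2 * n + 1))
    calc (n + 1).centralBinom ^ 2 * (2 * (n + 1) + 1) * ((n + 1) ^ 2 * (2 * n + 1))
        = ((n + 1) * (n + 1).centralBinom) ^ 2 * ((2 * n + 3) * (2 * n + 1)) := by ring
      _ = 4 * (2 * n + 1) ^ 2 * (2 * n + 3) * (n.centralBinom ^ 2 * (2 * n + 1)) := by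
        rw [Nat.succ_mul_centralBinom_succ]; ring
      _ ≤ 16 * (n + 1) ^ 2 * (2 * n + 1) * 16 ^ n := by
        refine Nat.mul_le_mul ?_ ih
        nlinarith
      _ = 16 ^ (n + 1) * ((n + 1) ^ 2 * (2 * n + 1)) := by ring

theorem Nat.exists_ge_centralBinom_le_mul_four_pow {δ : ℝ} (hδ : 0 < δ) (N : ℕ) :
    ∃ n ≥ N, (n.centralBinom : ℝ) ≤ δ * 4 ^ n := by
  obtain ⟨n, hn⟩ := exists_nat_gt (1 / δ ^ 2)
  refine ⟨max n N, le_max_right _ _, ?_⟩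
  set k := max n N
  have hsq : (k.centralBinom : ℝ) ^ 2 * (2 * k + 1) ≤ (4 ^ k) ^ 2 := by
    rw [← pow_mul, mul_comm k, pow_mul]; exact_mod_cast Nat.centralBinom_sq_mul_le k
  have hk : 1 ≤ δ ^ 2 * (2 * k + 1) := by
    have : (n : ℝ) ≤ k := by exact_mod_cast le_max_left n N
    rw [div_lt_iff₀ (by positivity)] at hn
    nlinarith
  refine (pow_le_pow_iff_left₀ (by positivity) (by positivity) two_ne_zero).1 ?_
  nlinarith

section LinearAlgebra

variable {ι K : Type*} [Fintype ι] [DecidableEq ι] [Field K]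

theorem Submodule.eq_top_of_forall_single_mem {W : Submodule K (ι → K)}
    (h : ∀ j, Pi.single j 1 ∈ W) : W = ⊤ := by
  rw [eq_top_iff, ← (Pi.basisFun K ι).span_eq, Submodule.span_le]
  rintro _ ⟨j, rfl⟩
  simpa using h j

theorem Submodule.span_eq_top_of_add_single_mem {X : Set (ι → K)} {i₀ : ι}
    (hX : ∀ i ≠ i₀, ∃ x ∈ X, x + Pi.single i 1 ∈ X) (h₀ : ∃ x ∈ X, x i₀ ≠ 0) :
    span K X = ⊤ := by
  have hsingle : ∀ i ≠ i₀, ∀ a : K, Pi.single i a ∈ span K X := by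
    intro i hi a
    obtain ⟨x, hx, hxi⟩ := hX i hi
    have : x + Pi.single i 1 - x ∈ span K X := sub_mem (subset_span hxi) (subset_span hx)
    simpa [← Pi.single_smul'] using Submodule.smul_mem _ a this
  refine eq_top_of_forall_single_mem fun i => ?_
  obtain rfl | hi := eq_or_ne i i₀
  · obtain ⟨x, hx, hxi⟩ := h₀
    have hx' : Pi.single i (x i) = x - ∑ j ∈ univ.erase i, Pi.single j (x j) := by
      rw [eq_sub_iff_add_eq]
      exact (add_sum_erase _ (fun j => Pi.single j (x j)) (mem_univ i)).trans (univ_sum_single x)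
    have : Pi.single i (x i) ∈ span K X := by
      rw [hx']
      exact sub_mem (subset_span hx) (sum_mem fun j hj => hsingle j (ne_of_mem_erase hj) _)
    simpa [← Pi.single_smul', hxi] using Submodule.smul_mem _ (x i)⁻¹ this
  · exact hsingle i hi 1

/-- Greedy: if `W` misses `Pi.single j 1`, adjoining it raises the dimension by one, and a vector
of the larger space differs from a vector of `W` in at most one coordinate. -/
theorem Submodule.exists_card_le_hammingNorm_add [DecidableEq K] (t : ℕ) (W : Submodule K (ι → K))
    (hW : Fintype.card ι ≤ finrank K W + t) : ∃ w ∈ W, Fintype.card ι ≤ hammingNorm w + t := by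
  induction t generalizing W with
  | zero =>
    have hW : W = ⊤ := Submodule.eq_top_of_finrank_eq
      (le_antisymm (Submodule.finrank_le W) (by simpa using hW))
    exact ⟨1, hW ▸ Submodule.mem_top, by rw [hammingNorm_one]; omega⟩
  | succ t ih =>
    by_cases h : ∀ j, Pi.single j 1 ∈ W
    · exact ⟨1, eq_top_of_forall_single_mem h ▸ Submodule.mem_top, by rw [hammingNorm_one]; omega⟩
    obtain ⟨j, hj⟩ := not_forall.1 h
    have hrank := Submodule.finrank_lt_finrank_of_lt (Submodule.lt_sup_iff_notMem.2 hj)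
    obtain ⟨w', hw', hw'wt⟩ := ih (W ⊔ K ∙ Pi.single j 1) (by omega)
    obtain ⟨w, hw, z, hz, rfl⟩ := Submodule.mem_sup.1 hw'
    obtain ⟨a, rfl⟩ := Submodule.mem_span_singleton.1 hz
    rw [← Pi.single_smul', smul_eq_mul, mul_one] at hw'wt
    have := hammingNorm_add_le w (Pi.single j a)
    have := hammingNorm_single_le j a
    exact ⟨w, hw, by omega⟩

end LinearAlgebra

theorem finrank_ker_funLeft_add_card {ι κ K : Type*} [Fintype ι] [Fintype κ] [Field K]
    {f : κ → ι} (hf : Function.Injective f) :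
    finrank K (LinearMap.ker (LinearMap.funLeft K K f)) + Fintype.card κ = Fintype.card ι := by
  have h := LinearMap.finrank_range_add_finrank_ker (LinearMap.funLeft K K f)
  rw [LinearMap.range_eq_top.2 (LinearMap.funLeft_surjective_of_injective K K f hf)] at h
  simpa [add_comm] using h

theorem critNum_eq {n c : ℕ} {X : Set (Fin n → ZMod 2)}
    (hW : ∃ W : Submodule (ZMod 2) (Fin n → ZMod 2), finrank (ZMod 2) W + c = n ∧ ∀ x ∈ X, x ∉ W)
    (hX : ∀ t < c, ∀ W : Submodule (ZMod 2) (Fin n → ZMod 2), finrank (ZMod 2) W + t = n →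
      ∃ x ∈ X, x ∈ W) :
    critNum X = c := by
  refine le_antisymm (Nat.sInf_le hW) (le_csInf ⟨c, hW⟩ fun t ⟨W, hWt, hWX⟩ => ?_)
  by_contra! ht
  obtain ⟨x, hxX, hxW⟩ := hX t ht W hWt
  exact hWX x hxX hxW

theorem TriangleFree.union {n : ℕ} {A B : Set (Fin n → ZMod 2)}
    (hA : ∀ x ∈ A, ∀ y ∈ A, x + y ∉ A ∪ B) (hB : ∀ x ∈ B, ∀ y ∈ B, x + y ∉ A ∪ B) :
    TriangleFree (A ∪ B) := by
  intro x hx y hy z hz _ _ _ hxyz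
  have hz' : x + y = z := by
    rw [← ZModModule.neg_eq_self z, ← add_eq_zero_iff_eq_neg, hxyz]
  have hy' : x + z = y := by rw [← hz', ← add_assoc, ZModModule.add_self, zero_add]
  have hx' : y + z = x := by rw [← hz', add_comm x y, ← add_assoc, ZModModule.add_self, zero_add]
  have hsplit : ∀ u v w, u + v = w → w ∈ A ∪ B → ¬ (u ∈ A ∧ v ∈ A ∨ u ∈ B ∧ v ∈ B) := by
    rintro u v w rfl hw (⟨hu, hv⟩ | ⟨hu, hv⟩)
    exacts [hA u hu v hv hw, hB u hu v hv hw]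
  have hxy := hsplit x y z hz' hz
  have hxz := hsplit x z y hy' hy
  have hyz := hsplit y z x hx' hx
  rcases hx with hx | hx <;> rcases hy with hy | hy <;> rcases hz with hz | hz
  exacts [hxy (.inl ⟨hx, hy⟩), hxy (.inl ⟨hx, hy⟩), hxz (.inl ⟨hx, hz⟩), hyz (.inr ⟨hy, hz⟩),
    hyz (.inl ⟨hy, hz⟩), hxz (.inr ⟨hx, hz⟩), hxy (.inr ⟨hx, hy⟩), hxy (.inr ⟨hx, hy⟩)]

namespace DenseTriangleFree

variable {ι : Type*} [Fintype ι]

def light (i₀ : ι) (d : ℕ) : Set (ι → ZMod 2) :=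
  {x | x i₀ = 1 ∧ 2 * d < hammingNorm x ∧ 2 * hammingNorm x + d < Fintype.card ι}

def heavy (d : ℕ) : Set (ι → ZMod 2) :=
  {x | Fintype.card ι ≤ hammingNorm x + d}

variable {i₀ : ι} {d : ℕ} {x y : ι → ZMod 2}

theorem zero_notMem_light_union_heavy (hd : d < Fintype.card ι) : 0 ∉ light i₀ d ∪ heavy d := by
  rintro (⟨h, -⟩ | h)
  · exact zero_ne_one h
  · simp only [heavy, Set.mem_ofPred_eq, hammingNorm_zero] at h
    omega

theorem add_notMem_of_mem_light (hx : x ∈ light i₀ d) (hy : y ∈ light i₀ d) :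
    x + y ∉ light i₀ d ∪ heavy d := by
  have := hammingNorm_add_le x y
  rintro (⟨h, -⟩ | h)
  · rw [Pi.add_apply, hx.1, hy.1] at h
    exact zero_ne_one h
  · simp only [light, heavy, Set.mem_ofPred_eq] at hx hy h
    omega

theorem add_notMem_of_mem_heavy (hd : 3 * d < Fintype.card ι) (hx : x ∈ heavy d)
    (hy : y ∈ heavy d) : x + y ∉ light i₀ d ∪ heavy d := by
  have := hammingNorm_add_add_le x y
  rintro (⟨-, h, -⟩ | h)
  all_goals simp only [heavy, Set.mem_ofPred_eq] at hx hy h; omega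

variable [DecidableEq ι]

theorem sum_single_mem_light {T : Finset ι} (hT : i₀ ∈ T) (h₁ : 2 * d < #T)
    (h₂ : 2 * #T + d < Fintype.card ι) : ∑ j ∈ T, Pi.single j 1 ∈ light i₀ d := by
  refine ⟨by simp [Finset.sum_apply, Pi.single_apply, hT], ?_⟩
  rw [hammingNorm_sum_single]
  exact ⟨h₁, h₂⟩

theorem span_light (hd : 5 * d + 4 < Fintype.card ι) :
    Submodule.span (ZMod 2) (light i₀ d) = ⊤ := by
  refine Submodule.span_eq_top_of_add_single_mem (i₀ := i₀) (fun i hi => ?_) ?_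
  · obtain ⟨T, hi₀T, hTi, hT⟩ := exists_subsuperset_card_eq (s := {i₀}) (t := univ.erase i)
      (n := 2 * d + 1) (by simpa using hi.symm) (by simp) (by simp; omega)
    have hiT : i ∉ T := fun h => by simpa using hTi h
    have hi₀ : i₀ ∈ T := singleton_subset_iff.1 hi₀T
    refine ⟨_, sum_single_mem_light hi₀ (by omega) (by omega), ?_⟩
    rw [add_comm, ← sum_insert (f := fun j => Pi.single j (1 : ZMod 2)) hiT]
    exact sum_single_mem_light (mem_insert_of_mem hi₀) (by simp [hiT]; omega)
      (by rw [card_insert_of_notMem hiT]; omega)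
  · obtain ⟨T, hi₀T, -, hT⟩ := exists_subsuperset_card_eq (s := {i₀}) (t := univ)
      (n := 2 * d + 1) (subset_univ _) (by simp) (by simp; omega)
    exact ⟨_, sum_single_mem_light (singleton_subset_iff.1 hi₀T) (by omega) (by omega),
      by simp [Finset.sum_apply, Pi.single_apply, singleton_subset_iff.1 hi₀T]⟩

theorem critNum_light_union_heavy {n : ℕ} (i₀ : Fin n) (hd : d < n) :
    critNum (light i₀ d ∪ heavy d) = d + 1 := by
  refine critNum_eq ?_ fun t ht W hW => ?_
  · obtain ⟨S, hi₀S, -, hS⟩ := exists_subsuperset_card_eq (s := {i₀}) (t := univ)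
      (n := d + 1) (subset_univ _) (by simp) (by simpa using hd)
    refine ⟨LinearMap.ker (LinearMap.funLeft (ZMod 2) (ZMod 2) ((↑) : S → Fin n)), ?_, ?_⟩
    · simpa [hS] using finrank_ker_funLeft_add_card (K := ZMod 2) (f := ((↑) : S → Fin n))
        Subtype.val_injective
    · intro x hxX hxW
      have hx : ∀ i ∈ S, x i = 0 := fun i hi => congrFun (LinearMap.mem_ker.1 hxW) ⟨i, hi⟩
      have := hammingNorm_add_card_le hx
      rw [Fintype.card_fin] at this
      rcases hxX with ⟨h, -⟩ | h
      · rw [hx i₀ (singleton_subset_iff.1 hi₀S)] at h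
        exact zero_ne_one h
      · simp only [heavy, Fintype.card_fin, Set.mem_ofPred_eq] at h
        omega
  · obtain ⟨w, hwW, hw⟩ := W.exists_card_le_hammingNorm_add t (by simp; omega)
    exact ⟨w, .inr (by simp only [heavy, Set.mem_ofPred_eq]; omega), hwW⟩

theorem ncard_light_zero (m d : ℕ) :
    (light (0 : Fin (m + 1)) d).ncard =
      #{v : Fin m → ZMod 2 | 2 * d ≤ hammingNorm v ∧ 2 * hammingNorm v + d + 2 ≤ m} := by
  rw [← Set.ncard_coe_finset, coe_filter]
  symm
  refine Set.ncard_congr (fun v _ => Fin.cons 1 v) (fun v hv => ?_)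
    (fun v w _ _ h => Fin.cons_right_injective _ h) (fun x hx => ⟨Fin.tail x, ?_, ?_⟩)
  · simp only [mem_univ, true_and, Set.mem_ofPred_eq] at hv
    simp only [light, Set.mem_ofPred_eq, Fin.cons_zero, hammingNorm_cons_one, Fintype.card_fin,
      true_and]
    exact ⟨by omega, by omega⟩
  · simp only [light, Set.mem_ofPred_eq, Fintype.card_fin] at hx
    have hw : hammingNorm x = hammingNorm (Fin.tail x) + 1 := by
      rw [← hammingNorm_cons_one, ← hx.1, Fin.cons_self_tail]
    simp only [mem_univ, true_and, Set.mem_ofPred_eq]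
    omega
  · rw [← hx.1]
    exact Fin.cons_self_tail x

theorem exists_le_ncard_light (ε : ℝ) (hε : 0 < ε) (d : ℕ) :
    ∃ m, 5 * d + 4 ≤ m ∧ ((1 / 4 : ℝ) - ε) * 2 ^ (m + 1) ≤ (light (0 : Fin (m + 1)) d).ncard := by
  obtain ⟨a, ha, hC⟩ := Nat.exists_ge_centralBinom_le_mul_four_pow
    (by positivity : 0 < 4 * ε / (5 * d + 2)) (3 * d + 2)
  refine ⟨2 * a, by omega, ?_⟩
  have hband : (2 : ℝ) ^ (2 * a) ≤ 2 * (light (0 : Fin (2 * a + 1)) d).ncard +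
      (5 * d + 2) * a.centralBinom := by
    have := two_pow_le_two_mul_card_band (ι := Fin (2 * a)) d
    rw [Fintype.card_fin, Nat.mul_div_cancel_left a two_pos, ← Nat.centralBinom_eq_two_mul_choose,
      ← ncard_light_zero] at this
    exact_mod_cast this
  have h4 : (4 : ℝ) ^ a = 2 ^ (2 * a) := by rw [pow_mul]; norm_num
  rw [div_mul_eq_mul_div, le_div_iff₀ (by positivity)] at hC
  rw [← h4] at hband
  rw [pow_succ, ← h4]
  linarith

end DenseTriangleFree

theorem stmt_1 (ε : ℝ) (hε : 0 < ε) (c : ℤ) (hc : 1 ≤ c) :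
    ∃ (r : ℕ) (X : Set (Fin r → ZMod 2)),
      (0 : Fin r → ZMod 2) ∉ X ∧
      Submodule.span (ZMod 2) X = ⊤ ∧
      TriangleFree X ∧
      ((1 / 4 : ℝ) - ε) * 2 ^ r ≤ (X.ncard : ℝ) ∧
      (critNum X : ℤ) = c := by
  obtain ⟨d, rfl⟩ : ∃ d : ℕ, c = d + 1 := ⟨(c - 1).toNat, by omega⟩
  obtain ⟨m, hm, hdense⟩ := DenseTriangleFree.exists_le_ncard_light ε hε d
  refine ⟨m + 1, DenseTriangleFree.light 0 d ∪ DenseTriangleFree.heavy d,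
    DenseTriangleFree.zero_notMem_light_union_heavy (by simp; omega), ?_,
    TriangleFree.union (fun x hx y hy => DenseTriangleFree.add_notMem_of_mem_light hx hy)
      (fun x hx y hy => DenseTriangleFree.add_notMem_of_mem_heavy (by simp; omega) hx hy), ?_, ?_⟩
  · exact eq_top_mono (Submodule.span_mono Set.subset_union_left)
      (DenseTriangleFree.span_light (by simp; omega))
  · exact hdense.trans (by exact_mod_cast Set.ncard_le_ncard Set.subset_union_left)
  · rw [DenseTriangleFree.critNum_light_union_heavy 0 (by omega)]
    norm_cast
end

section
/- For all integers c, g ≥ 2 and all sufficiently large natural numbers n, there exists a set Z ⊆ (ZMod 2)^n such that: every nonempty subset of Z with fewer than g elements is linearly independent over ZMod 2 (so the simple binary matroid represented by Z has girth at least g); every linear subspace of (ZMod 2)^n of codimension c − 1 has nonempty intersection with Z (so the critical number of Z is at least c); and wt(z) ≥ n − 2cg for every z ∈ Z. -/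
/-!
Take `z = 1 + 1_T + 1_R`, where the core `T` ranges over all sets of size at most `c - 1` and,
for each core, `R` ranges over `L` random pads of even size `p = 2c(g - 1)`, with `L` polynomial
in `n`. Every such `z` has weight at least `n - (c - 1) - p`.

Fewer than `g` of these vectors, an odd number of them, cannot sum to zero: their supports miss a
common coordinate. An even number of them sums to the sum of the `1_T + 1_R`; only polynomially
many (of degree `c(g - 1) < p`) index sets have to be considered, and each one has zero sum for
only a `1 / C(n, p)` fraction of the choices of pads.

If `W` has codimension `c - 1` and `σ` is the quotient map, `σ 1` is a sum of at most `c - 1` of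
the `σ e_j`, which gives a core `T` with `σ 1_T = σ 1`; by pigeonhole, `σ e_j = v` on a set `A`
of at least `n / 2^(c-1)` coordinates. A random pad lies in `A` with probability bounded below
independently of `n`, so for all but a tiny fraction of choices one of the `L` pads `R` of `T`
does, and then `σ z = σ 1 + σ 1 + p • v = 0`. A union bound over both kinds of failure leaves a
good choice of pads.
-/

/-- Hamming weight of a vector over `ZMod 2`. -/
def hWt {m : ℕ} (x : Fin m → ZMod 2) : ℕ :=
  (Finset.univ.filter fun i => x i ≠ 0).card

open Finset Filter

section CharTwo

variable {M : Type*} [AddCommGroup M] [Module (ZMod 2) M]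

theorem nsmul_eq_zero_of_even {k : ℕ} (hk : Even k) (v : M) : k • v = 0 := by
  rw [← Nat.cast_smul_eq_nsmul (ZMod 2), (ZMod.natCast_eq_zero_iff_even).2 hk, zero_smul]

theorem linearIndependent_zmod_two_iff {ι : Type*} (v : ι → M) :
    LinearIndependent (ZMod 2) v ↔ ∀ s : Finset ι, s.Nonempty → ∑ i ∈ s, v i ≠ 0 := by
  classical
  rw [linearIndependent_iff']
  constructor
  · rintro h s ⟨i, hi⟩ hs
    exact one_ne_zero (h s 1 (by simpa using hs) i hi)
  · intro h s c hc i hi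
    by_contra hci
    refine h {j ∈ s | c j ≠ 0} ⟨i, mem_filter.2 ⟨hi, hci⟩⟩ ?_
    rw [sum_filter]
    refine (sum_congr rfl fun j _ => ?_).trans hc
    have : ∀ a : ZMod 2, a = 0 ∨ a = 1 := by decide
    rcases this (c j) with hcj | hcj <;> simp [hcj]

theorem exists_subset_card_le_finrank_sum_eq [Module.Finite (ZMod 2) M] {ι : Type*}
    (f : ι → M) (T : Finset ι) :
    ∃ T' ⊆ T, #T' ≤ Module.finrank (ZMod 2) M ∧ ∑ i ∈ T', f i = ∑ i ∈ T, f i := by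
  classical
  induction T using Finset.strongInduction with
  | H T ih =>
    by_cases hT : LinearIndependent (ZMod 2) (fun i : T => f i)
    · exact ⟨T, subset_rfl, by simpa using hT.fintype_card_le_finrank, rfl⟩
    obtain ⟨s, hs, hs0⟩ : ∃ s : Finset T, s.Nonempty ∧ ∑ i ∈ s, f i = 0 := by
      simpa [linearIndependent_zmod_two_iff] using hT
    set U := s.map (Function.Embedding.subtype _)
    have hUT : U ⊆ T := by
      intro i hi
      obtain ⟨j, -, rfl⟩ := mem_map.1 hi
      exact j.2
    obtain ⟨T', hT', hcard, hsum⟩ := ih (T \ U) (sdiff_ssubset hUT (hs.map))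
    refine ⟨T', hT'.trans sdiff_subset, hcard, ?_⟩
    rw [hsum, ← sum_sdiff hUT, sum_map, Function.Embedding.coe_subtype, hs0, add_zero]

end CharTwo

section IndicatorVec

variable {α : Type*} [DecidableEq α]

def indicatorVec (S : Finset α) : α → ZMod 2 := ∑ i ∈ S, Pi.single i 1

theorem indicatorVec_apply (S : Finset α) (j : α) :
    indicatorVec S j = if j ∈ S then 1 else 0 := by
  simp [indicatorVec, Finset.sum_apply, Pi.single_apply]

theorem indicatorVec_injective :
    Function.Injective (indicatorVec : Finset α → α → ZMod 2) := by
  intro S S' h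
  ext j
  have := congrFun h j
  simp only [indicatorVec_apply] at this
  split_ifs at this <;> simp_all

theorem indicatorVec_univ [Fintype α] : indicatorVec (univ : Finset α) = 1 :=
  univ_sum_single _

end IndicatorVec

theorem card_filter_card_le_le_pow (α : Type*) [Fintype α] (k : ℕ) :
    #{s : Finset α | #s ≤ k} ≤ (Fintype.card α + 1) ^ k := by
  classical
  have hsub : ({s : Finset α | #s ≤ k} : Finset _) ⊆
      (range (k + 1)).biUnion (powersetCard · univ) := by
    intro s hs
    simp only [mem_filter, mem_univ, true_and] at hs
    simpa [Nat.lt_succ_iff] using hs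
  calc #{s : Finset α | #s ≤ k}
      ≤ ∑ j ∈ range (k + 1), #(powersetCard j (univ : Finset α)) :=
        (card_le_card hsub).trans card_biUnion_le
    _ ≤ ∑ j ∈ range (k + 1), Fintype.card α ^ j * 1 ^ (k - j) * k.choose j := by
        refine sum_le_sum fun j hj => ?_
        rw [card_powersetCard, card_univ, one_pow, mul_one]
        exact (Nat.choose_le_pow _ _).trans
          (Nat.le_mul_of_pos_right _ (Nat.choose_pos (by simpa [Nat.lt_succ_iff] using hj)))
    _ = (Fintype.card α + 1) ^ k := (add_pow _ _ _).symm

theorem card_filter_exists_le {α β : Type*} [DecidableEq α] (s : Finset α) (t : Finset β)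
    (P : α → β → Prop) [∀ a b, Decidable (P a b)] :
    #{a ∈ s | ∃ b ∈ t, P a b} ≤ ∑ b ∈ t, #{a ∈ s | P a b} := by
  refine (card_le_card fun a ha => ?_).trans card_biUnion_le
  obtain ⟨has, b, hb, hab⟩ := mem_filter.1 ha
  exact mem_biUnion.2 ⟨b, hb, mem_filter.2 ⟨has, hab⟩⟩

theorem two_mul_pow_le_add_pow {x y m : ℕ} (hm : 1 ≤ m) (h : x ≤ m * y) :
    2 * x ^ m ≤ (x + y) ^ m := by
  calc 2 * x ^ m = x ^ m + x ^ (m - 1) * x := by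
        rw [← pow_succ, Nat.sub_add_cancel hm]; ring
    _ ≤ x ^ m + m * x ^ (m - 1) * y := by
        rw [mul_comm (m : ℕ), mul_assoc]; gcongr
    _ ≤ (x + y) ^ m := pow_add_mul_le_add_pow (Nat.zero_le _) (Nat.zero_le _) m

theorem choose_le_pow_mul_choose {n a b p : ℕ} (h : n ≤ b * (a + 1 - p)) :
    n.choose p ≤ b ^ p * a.choose p := by
  refine Nat.le_of_mul_le_mul_left ?_ (Nat.factorial_pos p)
  calc p.factorial * n.choose p = n.descFactorial p :=
        (Nat.descFactorial_eq_factorial_mul_choose _ _).symm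
    _ ≤ n ^ p := Nat.descFactorial_le_pow _ _
    _ ≤ b ^ p * (a + 1 - p) ^ p := by rw [← mul_pow]; gcongr
    _ ≤ b ^ p * a.descFactorial p := by gcongr; exact Nat.pow_sub_le_descFactorial a p
    _ = p.factorial * (b ^ p * a.choose p) := by
        rw [Nat.descFactorial_eq_factorial_mul_choose]; ring

theorem eventually_mul_pow_le_choose {e p : ℕ} (hep : e < p) (K : ℕ) :
    ∀ᶠ n in atTop, K * (n + 1) ^ e ≤ n.choose p := by
  filter_upwards [eventually_ge_atTop (2 * p), eventually_ge_atTop (K * p.factorial * 2 ^ p)]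
    with n h2p hK
  refine Nat.le_of_mul_le_mul_left ?_ (by positivity : 0 < p.factorial * 2 ^ p)
  calc p.factorial * 2 ^ p * (K * (n + 1) ^ e) = K * p.factorial * 2 ^ p * (n + 1) ^ e := by ring
    _ ≤ (n + 1) * (n + 1) ^ e := by gcongr; omega
    _ ≤ (n + 1) ^ p := by rw [← pow_succ']; exact Nat.pow_le_pow_right (by omega) hep
    _ ≤ (2 * (n + 1 - p)) ^ p := by gcongr; omega
    _ ≤ 2 ^ p * n.descFactorial p := by
        rw [mul_pow]; gcongr; exact Nat.pow_sub_le_descFactorial n p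
    _ = p.factorial * 2 ^ p * n.choose p := by
        rw [Nat.descFactorial_eq_factorial_mul_choose]; ring

section PiFinset

open Fintype

variable {ι α : Type*} [Fintype ι] [DecidableEq ι]

theorem card_filter_piFinset_const_le_of_determined (s : Finset α) (i₀ : ι)
    (P : (ι → α) → Prop) [DecidablePred P]
    (hP : ∀ F G, P F → P G → (∀ i ≠ i₀, F i = G i) → F i₀ = G i₀) :
    #{F ∈ piFinset fun _ => s | P F} ≤ #s ^ (card ι - 1) := by
  calc #{F ∈ piFinset fun _ => s | P F}
      ≤ #(piFinset fun _ : {i // i ≠ i₀} => s) := by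
        refine card_le_card_of_injOn (fun F i => F i) (fun F hF => ?_) fun F hF G hG hFG => ?_
        · rw [mem_coe, mem_filter, mem_piFinset] at hF
          simp [hF.1]
        · rw [mem_coe, mem_filter] at hF hG
          have hoff : ∀ i ≠ i₀, F i = G i := fun i hi => congrFun hFG ⟨i, hi⟩
          funext i
          by_cases hi : i = i₀
          · subst hi; exact hP F G hF.2 hG.2 hoff
          · exact hoff i hi
    _ = #s ^ (card ι - 1) := by
        rw [card_piFinset, prod_const, card_univ, card_subtype_compl, card_subtype_eq]

theorem card_filter_piFinset_const_forall (s : Finset α) (I : Finset ι) (q : α → Prop)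
    [DecidablePred q] :
    #{F ∈ piFinset fun _ => s | ∀ i ∈ I, q (F i)} =
      #{a ∈ s | q a} ^ #I * #s ^ (card ι - #I) := by
  have : {F ∈ piFinset fun _ : ι => s | ∀ i ∈ I, q (F i)} =
      piFinset fun i => if i ∈ I then {a ∈ s | q a} else s := by
    ext F
    simp only [mem_filter, mem_piFinset]
    grind
  rw [this, card_piFinset]
  simp only [apply_ite card]
  rw [prod_ite, prod_const, prod_const, filter_mem_eq_inter, univ_inter,
    filter_not, filter_mem_eq_inter, univ_inter, card_sdiff_of_subset (subset_univ I), card_univ]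

end PiFinset

theorem card_filter_subset_powersetCard {α : Type*} [Fintype α] [DecidableEq α] (A : Finset α)
    (p : ℕ) : #{R ∈ powersetCard p (univ : Finset α) | R ⊆ A} = (#A).choose p := by
  rw [← card_powersetCard]
  congr 1
  ext R
  simp only [mem_filter, mem_powersetCard, subset_univ, true_and]
  tauto

theorem exists_forall_notMem_of_sum_card_lt {α ι : Type*} [Fintype α] [DecidableEq α]
    (J : Finset ι) (U : ι → Finset α) (h : ∑ i ∈ J, #(U i) < Fintype.card α) :
    ∃ a, ∀ i ∈ J, a ∉ U i := by
  obtain ⟨a, -, ha⟩ := exists_mem_notMem_of_card_lt_card (s := J.biUnion U) (t := univ)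
    (card_biUnion_le.trans_lt (by simpa using h))
  exact ⟨a, fun i hi hai => ha (mem_biUnion.2 ⟨i, hi, hai⟩)⟩

section PadFamily

variable {n r L : ℕ}

abbrev Core (n r : ℕ) : Type := {T : Finset (Fin n) // #T ≤ r}

abbrev PadIndex (n r L : ℕ) : Type := Core n r × Fin L

variable (F : PadIndex n r L → Finset (Fin n))

def sparseVec (i : PadIndex n r L) : Fin n → ZMod 2 := indicatorVec i.1.1 + indicatorVec (F i)

def denseVec (i : PadIndex n r L) : Fin n → ZMod 2 := 1 + sparseVec F i

structure IsGoodPadFamily (p g : ℕ) : Prop where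
  card_eq : ∀ i, #(F i) = p
  sum_sparseVec_ne_zero :
    ∀ J : Finset (PadIndex n r L), 2 ≤ #J → #J < g → ∑ i ∈ J, sparseVec F i ≠ 0
  /-- `2 ^ r` is the size of the quotient by a subspace of codimension `r`. -/
  exists_subset : ∀ T A, n ≤ #A * 2 ^ r → ∃ j, F (T, j) ⊆ A

theorem denseVec_apply_of_notMem {i : PadIndex n r L} {j : Fin n} (hT : j ∉ i.1.1)
    (hF : j ∉ F i) : denseVec F i j = 1 := by
  simp [denseVec, sparseVec, indicatorVec_apply, hT, hF]

theorem sub_card_le_hWt_denseVec (i : PadIndex n r L) :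
    n - (#i.1.1 + #(F i)) ≤ hWt (denseVec F i) := by
  calc n - (#i.1.1 + #(F i)) ≤ #(univ \ (i.1.1 ∪ F i)) := by
        rw [card_sdiff_of_subset (subset_univ _), card_univ, Fintype.card_fin]
        have := card_union_le i.1.1 (F i)
        omega
    _ ≤ hWt (denseVec F i) := by
        refine card_le_card fun j hj => ?_
        rw [Finset.mem_sdiff, Finset.mem_union, not_or] at hj
        simp [denseVec_apply_of_notMem F hj.2.1 hj.2.2]

variable {F} {p g : ℕ}

theorem IsGoodPadFamily.sum_denseVec_ne_zero (hF : IsGoodPadFamily F p g)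
    (hn : g * (r + p) < n) {J : Finset (PadIndex n r L)} (hJ : J.Nonempty) (hJg : #J < g) :
    ∑ i ∈ J, denseVec F i ≠ 0 := by
  rcases Nat.even_or_odd #J with hev | hodd
  · have h2 : 2 ≤ #J := by
      obtain ⟨k, hk⟩ := hev
      have := hJ.card_pos
      omega
    have hsum : ∑ i ∈ J, denseVec F i = ∑ i ∈ J, sparseVec F i := by
      simp [denseVec, sum_add_distrib, nsmul_eq_zero_of_even hev]
    exact hsum ▸ hF.sum_sparseVec_ne_zero J h2 hJg
  · have hcard : ∑ i ∈ J, #(i.1.1 ∪ F i) < Fintype.card (Fin n) := by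
      calc ∑ i ∈ J, #(i.1.1 ∪ F i) ≤ ∑ _i ∈ J, (r + p) :=
            sum_le_sum fun i _ => (card_union_le _ _).trans (add_le_add i.1.2 (hF.card_eq i).le)
        _ ≤ g * (r + p) := by rw [sum_const, smul_eq_mul]; gcongr
        _ < Fintype.card (Fin n) := by rwa [Fintype.card_fin]
    obtain ⟨j, hj⟩ := exists_forall_notMem_of_sum_card_lt J _ hcard
    intro h
    have hj1 : ∀ i ∈ J, denseVec F i j = 1 := fun i hi => by
      simp only [mem_union, not_or] at hj
      exact denseVec_apply_of_notMem F (hj i hi).1 (hj i hi).2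
    have := congrFun h j
    rw [Finset.sum_apply, sum_congr rfl hj1, sum_const, nsmul_one] at this
    exact (ZMod.natCast_ne_zero_iff_odd.2 hodd) this

theorem IsGoodPadFamily.linearIndependent (hF : IsGoodPadFamily F p g)
    (hn : g * (r + p) < n) {S : Finset (Fin n → ZMod 2)}
    (hSZ : ↑S ⊆ Set.range (denseVec F)) (hS : #S < g) :
    LinearIndependent (ZMod 2) (fun x : S => (x : Fin n → ZMod 2)) := by
  classical
  rw [linearIndependent_zmod_two_iff]
  intro s hs hsum
  let idx : S → PadIndex n r L := fun x => Set.rangeSplitting (denseVec F) ⟨x, hSZ x.2⟩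
  have hinv : ∀ x : S, denseVec F (idx x) = x := fun x => Set.apply_rangeSplitting _ _
  have hinj : Set.InjOn idx s :=
    fun x _ y _ hxy => Subtype.ext <| by rw [← hinv x, ← hinv y]; exact congrArg _ hxy
  refine hF.sum_denseVec_ne_zero hn (hs.image idx) ?_ ?_
  · calc #(s.image _) ≤ #s := card_image_le
      _ ≤ #S := by simpa using card_le_univ s
      _ < g := hS
  · rw [sum_image hinj, sum_congr rfl fun x _ => hinv x, hsum]

theorem IsGoodPadFamily.exists_denseVec_mem (hF : IsGoodPadFamily F p g) (hp : Even p)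
    (W : Submodule (ZMod 2) (Fin n → ZMod 2)) (hW : Module.finrank (ZMod 2) W + r = n) :
    ∃ i, denseVec F i ∈ W := by
  classical
  let e : Fin n → (Fin n → ZMod 2) ⧸ W := fun j => W.mkQ (Pi.single j 1)
  have hmkQ : ∀ S, W.mkQ (indicatorVec S) = ∑ j ∈ S, e j := fun S => map_sum _ _ _
  have hrank : Module.finrank (ZMod 2) ((Fin n → ZMod 2) ⧸ W) = r := by
    have := W.finrank_quotient_add_finrank
    rw [Module.finrank_fin_fun (ZMod 2)] at this
    omega
  have : Fintype ((Fin n → ZMod 2) ⧸ W) := Fintype.ofFinite _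
  have hcard : Fintype.card ((Fin n → ZMod 2) ⧸ W) = 2 ^ r := by
    rw [Module.card_eq_pow_finrank (K := ZMod 2), ZMod.card, hrank]
  obtain ⟨T, -, hT, hTsum⟩ := exists_subset_card_le_finrank_sum_eq e univ
  obtain ⟨v, hv⟩ := Fintype.exists_le_card_fiber_of_nsmul_le_card e
      (b := (n : ℚ) / 2 ^ r) <| by
    rw [hcard, nsmul_eq_mul, Fintype.card_fin]; push_cast; rw [mul_div_cancel₀ _ (by positivity)]
  obtain ⟨j, hj⟩ := hF.exists_subset ⟨T, hrank ▸ hT⟩ {i | e i = v} <| by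
    rw [div_le_iff₀ (by positivity)] at hv
    exact_mod_cast hv
  refine ⟨(⟨T, hrank ▸ hT⟩, j), (Submodule.Quotient.mk_eq_zero W).1 ?_⟩
  change W.mkQ (denseVec F _) = 0
  have hFv : ∑ i ∈ F (⟨T, hrank ▸ hT⟩, j), e i = 0 := by
    rw [sum_congr rfl fun i hi => (mem_filter.1 (hj hi)).2, sum_const,
      nsmul_eq_zero_of_even ((hF.card_eq _).symm ▸ hp)]
  rw [denseVec, sparseVec, map_add, map_add, ← indicatorVec_univ, hmkQ, hmkQ, hmkQ, hFv,
    add_zero, hTsum]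
  exact (two_nsmul _).symm.trans (nsmul_eq_zero_of_even even_two _)

def padFamilies (n r L p : ℕ) : Finset (PadIndex n r L → Finset (Fin n)) :=
  Fintype.piFinset fun _ => powersetCard p univ

def shortIndexSets (n r L g : ℕ) : Finset (Finset (PadIndex n r L)) := {J | 2 ≤ #J ∧ #J < g}

def largeTargets (n r : ℕ) : Finset (Core n r × Finset (Fin n)) := {TA | n ≤ #TA.2 * 2 ^ r}

theorem card_padFamilies :
    #(padFamilies n r L p) = n.choose p ^ Fintype.card (PadIndex n r L) := by
  simp [padFamilies]

theorem card_padIndex_le : Fintype.card (PadIndex n r L) ≤ (n + 1) ^ r * L := by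
  rw [Fintype.card_prod, Fintype.card_fin, Fintype.card_subtype]
  gcongr
  simpa using card_filter_card_le_le_pow (Fin n) r

theorem card_filter_sum_sparseVec_eq_zero_le {J : Finset (PadIndex n r L)} (hJ : J.Nonempty) :
    #{F ∈ padFamilies n r L p | ∑ i ∈ J, sparseVec F i = 0} ≤
      n.choose p ^ (Fintype.card (PadIndex n r L) - 1) := by
  obtain ⟨i₀, hi₀⟩ := hJ
  have := card_filter_piFinset_const_le_of_determined (powersetCard p (univ : Finset (Fin n))) i₀
    (fun F => ∑ i ∈ J, sparseVec F i = 0) fun F G hF hG hFG => indicatorVec_injective ?_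
  · simpa [padFamilies] using this
  have hrest : ∑ i ∈ J.erase i₀, sparseVec F i = ∑ i ∈ J.erase i₀, sparseVec G i :=
    sum_congr rfl fun i hi => by rw [sparseVec, sparseVec, hFG i (ne_of_mem_erase hi)]
  rw [← add_sum_erase _ _ hi₀, hrest] at hF
  rw [← add_sum_erase _ _ hi₀] at hG
  simpa [sparseVec] using hF.trans hG.symm

theorem four_mul_card_filter_exists_sum_sparseVec_eq_zero_le (hL : 0 < L)
    (hcount : 4 * (Fintype.card (PadIndex n r L) + 1) ^ (g - 1) ≤ n.choose p) :
    4 * #{F ∈ padFamilies n r L p |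
        ∃ J ∈ shortIndexSets n r L g, ∑ i ∈ J, sparseVec F i = 0} ≤
      #(padFamilies n r L p) := by
  set N := Fintype.card (PadIndex n r L)
  have hN : 1 ≤ N := Fintype.card_pos_iff.2 ⟨(⟨∅, by simp⟩, ⟨0, hL⟩)⟩
  have hshort : #(shortIndexSets n r L g) ≤ (N + 1) ^ (g - 1) :=
    (card_le_card (monotone_filter_right _ fun J hJ => by omega)).trans
      (card_filter_card_le_le_pow _ _)
  have hsum : ∑ J ∈ shortIndexSets n r L g,
      #{F ∈ padFamilies n r L p | ∑ i ∈ J, sparseVec F i = 0} ≤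
        #(shortIndexSets n r L g) * n.choose p ^ (N - 1) := by
    refine sum_le_card_nsmul _ _ _ fun J hJ => card_filter_sum_sparseVec_eq_zero_le ?_
    exact card_pos.1 (by simp [shortIndexSets] at hJ; omega)
  calc _ ≤ 4 * ∑ J ∈ shortIndexSets n r L g,
        #{F ∈ padFamilies n r L p | ∑ i ∈ J, sparseVec F i = 0} :=
        Nat.mul_le_mul_left 4 (card_filter_exists_le _ _ _)
    _ ≤ 4 * (N + 1) ^ (g - 1) * n.choose p ^ (N - 1) := by
        rw [mul_assoc]; gcongr; exact hsum.trans (by gcongr)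
    _ ≤ n.choose p * n.choose p ^ (N - 1) := by gcongr
    _ = #(padFamilies n r L p) := by rw [card_padFamilies, ← pow_succ', Nat.sub_add_cancel hN]

/-- A pad lies inside `A` with probability at least `1 / m`, where `m = (2 ^ (r + 1)) ^ p`, so all
of `m` independent pads miss `A` with probability at most `(1 - 1 / m) ^ m ≤ 1 / 2`. -/
theorem two_mul_card_filter_not_subset_pow_le {A : Finset (Fin n)} (hpn : 2 ^ (r + 1) * p ≤ n)
    (hA : n ≤ #A * 2 ^ r) :
    2 * #{R ∈ powersetCard p univ | ¬ R ⊆ A} ^ (2 ^ (r + 1)) ^ p ≤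
      n.choose p ^ (2 ^ (r + 1)) ^ p := by
  have hsplit := card_filter_add_card_filter_not (s := powersetCard p (univ : Finset (Fin n)))
    (fun R => R ⊆ A)
  rw [card_filter_subset_powersetCard, card_powersetCard, card_univ, Fintype.card_fin] at hsplit
  have hratio : n.choose p ≤ (2 ^ (r + 1)) ^ p * (#A).choose p := by
    refine choose_le_pow_mul_choose ?_
    have hq : 0 < 2 ^ r := by positivity
    rw [pow_succ] at hpn ⊢
    have hpA : p ≤ #A := by nlinarith
    obtain ⟨d, hd⟩ := Nat.exists_eq_add_of_le hpA
    rw [hd] at hA ⊢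
    rw [show p + d + 1 - p = d + 1 by omega]
    nlinarith
  have hm : 1 ≤ (2 ^ (r + 1)) ^ p := Nat.one_le_pow _ _ (by positivity)
  rw [← hsplit, Nat.add_comm ((#A).choose p)]
  exact two_mul_pow_le_add_pow hm (by omega)

theorem four_pow_mul_card_filter_forall_not_subset_le (hpn : 2 ^ (r + 1) * p ≤ n)
    (hL : L = (2 ^ (r + 1)) ^ p * (2 * n + 2)) (T : Core n r) {A : Finset (Fin n)}
    (hA : n ≤ #A * 2 ^ r) :
    4 ^ (n + 1) * #{F ∈ padFamilies n r L p | ∀ j, ¬ F (T, j) ⊆ A} ≤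
      #(padFamilies n r L p) := by
  have hLN : L ≤ Fintype.card (PadIndex n r L) := by
    rw [Fintype.card_prod, Fintype.card_fin]
    exact Nat.le_mul_of_pos_left _ (Fintype.card_pos_iff.2 ⟨⟨∅, by simp⟩⟩)
  set X := #{R ∈ powersetCard p univ | ¬ R ⊆ A}
  set P := n.choose p
  have hcount : #{F ∈ padFamilies n r L p | ∀ j, ¬ F (T, j) ⊆ A} =
      X ^ L * P ^ (Fintype.card (PadIndex n r L) - L) := by
    have := card_filter_piFinset_const_forall (powersetCard p (univ : Finset (Fin n)))
      ((univ : Finset (Fin L)).map ⟨(T, ·), Prod.mk_right_injective T⟩) (fun R => ¬ R ⊆ A)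
    simpa [padFamilies] using this
  have hX : 4 ^ (n + 1) * X ^ L ≤ P ^ L := by
    rw [hL, pow_mul, pow_mul, show 4 ^ (n + 1) = 2 ^ (2 * n + 2) by
      rw [show 2 * n + 2 = 2 * (n + 1) by ring, pow_mul]; norm_num, ← mul_pow]
    gcongr
    exact two_mul_card_filter_not_subset_pow_le hpn hA
  calc 4 ^ (n + 1) * #{F ∈ padFamilies n r L p | ∀ j, ¬ F (T, j) ⊆ A}
      = 4 ^ (n + 1) * X ^ L * P ^ (Fintype.card (PadIndex n r L) - L) := by
        rw [hcount, mul_assoc]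
    _ ≤ P ^ L * P ^ (Fintype.card (PadIndex n r L) - L) := by gcongr
    _ = #(padFamilies n r L p) := by rw [← pow_add, Nat.add_sub_cancel' hLN, card_padFamilies]

theorem four_mul_card_filter_exists_forall_not_subset_le (hpn : 2 ^ (r + 1) * p ≤ n)
    (hL : L = (2 ^ (r + 1)) ^ p * (2 * n + 2)) :
    4 * #{F ∈ padFamilies n r L p |
        ∃ TA ∈ largeTargets n r, ∀ j, ¬ F (TA.1, j) ⊆ TA.2} ≤
      #(padFamilies n r L p) := by
  have hlarge : #(largeTargets n r) ≤ 4 ^ n := by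
    calc #(largeTargets n r) ≤ Fintype.card (Core n r) * 2 ^ n := by
          simpa using card_le_univ (largeTargets n r)
      _ ≤ 2 ^ n * 2 ^ n := by
          gcongr
          simpa using Fintype.card_subtype_le (fun T : Finset (Fin n) => #T ≤ r)
      _ = 4 ^ n := by rw [← mul_pow]; norm_num
  have hsum := card_filter_exists_le (padFamilies n r L p) (largeTargets n r)
    fun F TA => ∀ j, ¬ F (TA.1, j) ⊆ TA.2
  refine Nat.le_of_mul_le_mul_left (c := 4 ^ n) ?_ (pow_pos (by norm_num) n)
  calc _ = 4 ^ (n + 1) * #{F ∈ padFamilies n r L p |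
          ∃ TA ∈ largeTargets n r, ∀ j, ¬ F (TA.1, j) ⊆ TA.2} := by
        rw [pow_succ, mul_assoc]
    _ ≤ ∑ TA ∈ largeTargets n r,
        4 ^ (n + 1) * #{F ∈ padFamilies n r L p | ∀ j, ¬ F (TA.1, j) ⊆ TA.2} := by
        rw [← mul_sum]; exact Nat.mul_le_mul_left _ hsum
    _ ≤ ∑ _TA ∈ largeTargets n r, #(padFamilies n r L p) :=
        sum_le_sum fun TA hTA =>
          four_pow_mul_card_filter_forall_not_subset_le hpn hL TA.1 (mem_filter.1 hTA).2
    _ ≤ 4 ^ n * #(padFamilies n r L p) := by rw [sum_const, smul_eq_mul]; gcongr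

theorem exists_isGoodPadFamily (hpn : 2 ^ (r + 1) * p ≤ n)
    (hL : L = (2 ^ (r + 1)) ^ p * (2 * n + 2))
    (hcount : 4 * (Fintype.card (PadIndex n r L) + 1) ^ (g - 1) ≤ n.choose p) :
    ∃ F : PadIndex n r L → Finset (Fin n), IsGoodPadFamily F p g := by
  have hsum := four_mul_card_filter_exists_sum_sparseVec_eq_zero_le (g := g)
    (by rw [hL]; positivity) hcount
  have hsubset := four_mul_card_filter_exists_forall_not_subset_le hpn hL
  set bad₁ := {F ∈ padFamilies n r L p |
    ∃ J ∈ shortIndexSets n r L g, ∑ i ∈ J, sparseVec F i = 0}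
  set bad₂ := {F ∈ padFamilies n r L p |
    ∃ TA ∈ largeTargets n r, ∀ j, ¬ F (TA.1, j) ⊆ TA.2}
  have hpos : 0 < #(padFamilies n r L p) := by
    rw [card_padFamilies]
    have : 0 < (Fintype.card (PadIndex n r L) + 1) ^ (g - 1) := by positivity
    have : 0 < n.choose p := by omega
    positivity
  obtain ⟨F, hFΩ, hFgood⟩ := exists_mem_notMem_of_card_lt_card (t := padFamilies n r L p)
    ((card_union_le bad₁ bad₂).trans_lt (by omega))
  refine ⟨F, fun i => ?_, fun J h2 hg hJ => ?_, fun T A hA => ?_⟩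
  · exact (mem_powersetCard.1 (Fintype.mem_piFinset.1 hFΩ i)).2
  · exact hFgood <| mem_union_left _ <|
      mem_filter.2 ⟨hFΩ, J, mem_filter.2 ⟨mem_univ _, h2, hg⟩, hJ⟩
  · by_contra! h
    exact hFgood <| mem_union_right _ <|
      mem_filter.2 ⟨hFΩ, (T, A), mem_filter.2 ⟨mem_univ _, hA⟩, h⟩

theorem card_padIndex_add_one_le {m : ℕ} (hm : 1 ≤ m) :
    Fintype.card (PadIndex n r (m * (2 * n + 2))) + 1 ≤ 3 * m * (n + 1) ^ (r + 1) := by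
  have : 1 ≤ m * (n + 1) ^ (r + 1) := Nat.one_le_iff_ne_zero.2 (by positivity)
  calc Fintype.card (PadIndex n r (m * (2 * n + 2))) + 1
      ≤ (n + 1) ^ r * (m * (2 * n + 2)) + 1 := by gcongr; exact card_padIndex_le
    _ = 2 * (m * (n + 1) ^ (r + 1)) + 1 := by ring
    _ ≤ 3 * (m * (n + 1) ^ (r + 1)) := by omega
    _ = 3 * m * (n + 1) ^ (r + 1) := by ring

theorem eventually_four_mul_card_padIndex_le_choose {r p g : ℕ} (hp : (r + 1) * (g - 1) < p) :
    ∀ᶠ n in atTop,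
      4 * (Fintype.card (PadIndex n r ((2 ^ (r + 1)) ^ p * (2 * n + 2))) + 1) ^ (g - 1) ≤
        n.choose p := by
  set m := (2 ^ (r + 1)) ^ p
  filter_upwards [eventually_mul_pow_le_choose hp (4 * (3 * m) ^ (g - 1))] with n hn
  calc _ ≤ 4 * (3 * m * (n + 1) ^ (r + 1)) ^ (g - 1) := by
        gcongr; exact card_padIndex_add_one_le (Nat.one_le_pow _ _ (by positivity))
    _ = 4 * (3 * m) ^ (g - 1) * (n + 1) ^ ((r + 1) * (g - 1)) := by
        rw [mul_pow (3 * m), ← pow_mul, mul_assoc]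
    _ ≤ n.choose p := hn

end PadFamily

theorem stmt_7 (c g : ℕ) (hc : 2 ≤ c) (hg : 2 ≤ g) :
    ∃ N : ℕ, ∀ n ≥ N, ∃ Z : Set (Fin n → ZMod 2),
      (∀ S : Finset (Fin n → ZMod 2), ↑S ⊆ Z → S.Nonempty → S.card < g →
        LinearIndependent (ZMod 2) (fun x : {x : Fin n → ZMod 2 // x ∈ S} => (x : Fin n → ZMod 2))) ∧
      (∀ W : Submodule (ZMod 2) (Fin n → ZMod 2),
        Module.finrank (ZMod 2) W + (c - 1) = n → (Z ∩ ↑W).Nonempty) ∧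
      (∀ z ∈ Z, n - 2 * c * g ≤ hWt z) := by
  obtain ⟨r, rfl⟩ : ∃ r, c = r + 1 := ⟨c - 1, by omega⟩
  rw [Nat.add_sub_cancel]
  set p := 2 * (r + 1) * (g - 1)
  have hp : Even p := ⟨(r + 1) * (g - 1), by ring⟩
  have hgp : 0 < (r + 1) * (g - 1) := Nat.mul_pos (by omega) (by omega)
  have hep : (r + 1) * (g - 1) < p := by simp only [p]; rw [mul_assoc]; omega
  have hpg : p + 2 * (r + 1) = 2 * (r + 1) * g := by
    simp only [p]; rw [← mul_add_one, Nat.sub_add_cancel (by omega)]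
  obtain ⟨N, hN⟩ := eventually_atTop.1 <| (eventually_four_mul_card_padIndex_le_choose hep).and
    (eventually_gt_atTop (2 ^ (r + 1) * p + g * (r + p)))
  refine ⟨N, fun n hn => ?_⟩
  obtain ⟨hcount, hlarge⟩ := hN n hn
  obtain ⟨F, hF⟩ := exists_isGoodPadFamily (by omega) rfl hcount
  refine ⟨Set.range (denseVec F), fun S hSZ _ hS => hF.linearIndependent (by omega) hSZ hS,
    fun W hW => ?_, ?_⟩
  · obtain ⟨i, hi⟩ := hF.exists_denseVec_mem hp W hW
    exact ⟨_, ⟨i, rfl⟩, hi⟩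
  · rintro _ ⟨i, rfl⟩
    have := i.1.2
    have := hF.card_eq i
    exact le_trans (by omega) (sub_card_le_hWt_denseVec F i)
end

section
/- Let Y ⊆ (ZMod 2)^r be a finite set with 0 ∉ Y spanning (ZMod 2)^r and critical number χ(Y) = c ≥ 2, and suppose that for every linearly independent subset I ⊆ Y with |I| = r − c + 1 one has χ(Y \ I) = c. Then there is no linear subspace F of (ZMod 2)^r of codimension c − 2 such that the set Y ∩ F has a linearly independent 1-codimensional subspace. -/
/-- The critical number of a set `R` of vectors, relative to its own span. -/
noncomputable def relCritNum {n : ℕ} (R : Set (Fin n → ZMod 2)) : ℕ :=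
  sInf {c : ℕ | ∃ W : Submodule (ZMod 2) (Fin n → ZMod 2),
    W ≤ Submodule.span (ZMod 2) R ∧
    Module.finrank (ZMod 2) W + c = Module.finrank (ZMod 2) (Submodule.span (ZMod 2) R) ∧
    ∀ x ∈ R, x ∉ W}

/-- `R` has a linearly independent 1-codimensional subspace: there is a codimension-1
subspace `F'` of `span R` such that `F' ∩ R` is linearly independent. -/
def HasIndepHyperplane {n : ℕ} (R : Set (Fin n → ZMod 2)) : Prop :=
  ∃ F' : Submodule (ZMod 2) (Fin n → ZMod 2),
    F' ≤ Submodule.span (ZMod 2) R ∧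
    Module.finrank (ZMod 2) F' + 1 = Module.finrank (ZMod 2) (Submodule.span (ZMod 2) R) ∧
    LinearIndependent (ZMod 2)
      (fun x : (↑F' ∩ R : Set (Fin n → ZMod 2)) => (x : Fin n → ZMod 2))

/-!
Suppose `F` has codimension `c - 2` and `F'` is a hyperplane of `S = span (Y ∩ F)` with
`I₀ = F' ∩ Y ∩ F` independent. Extending a complement of `S` inside `F` by `F'` gives a hyperplane
`H` of `F` with `H ∩ S = F'`, so `Y ∩ H = I₀`. Since `|I₀| ≤ dim F' ≤ r - c + 1`, `I₀` extends to
an independent `I ⊆ Y` of size `r - c + 1`. Then `H ∩ span (Y \ I)` avoids `Y \ I` and has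
codimension at most `codim H = c - 1` in `span (Y \ I)`, contradicting `χ(Y \ I) = c`.
-/

open Submodule Module

section LinearAlgebra

variable {K V : Type*} [Field K] [AddCommGroup V] [Module K V] [FiniteDimensional K V]

theorem LinearIndepOn.ncard_eq_finrank_span {s : Set V} (hs : LinearIndepOn K id s) :
    s.ncard = finrank K (span K s) := by
  have : Fintype s := hs.setFinite.fintype
  rw [finrank_span_set_eq_card hs, Set.ncard_eq_toFinset_card']

theorem LinearIndepOn.ncard_le_finrank {s : Set V} {p : Submodule K V} (hs : LinearIndepOn K id s)
    (hsp : s ⊆ p) : s.ncard ≤ finrank K p :=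
  hs.ncard_eq_finrank_span ▸ finrank_mono (span_le.mpr hsp)

theorem LinearIndepOn.exists_superset_subset_ncard_eq {J Y : Set V} (hJ : LinearIndepOn K id J)
    (hJY : J ⊆ Y) (hY : span K Y = ⊤) {k : ℕ} (hJk : J.ncard ≤ k) (hk : k ≤ finrank K V) :
    ∃ I, J ⊆ I ∧ I ⊆ Y ∧ LinearIndepOn K id I ∧ I.ncard = k := by
  have hbasis : (hJ.extend hJY).ncard = finrank K V := by
    rw [(hJ.linearIndepOn_extend hJY).ncard_eq_finrank_span, hJ.span_extend_eq_span, hY,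
      finrank_top]
  obtain ⟨I, hJI, hIb, hIk⟩ :=
    Set.exists_subsuperset_card_eq (hJ.subset_extend hJY) hJk (hbasis ▸ hk)
  exact ⟨I, hJI, hIb.trans (hJ.extend_subset hJY),
    (hJ.linearIndepOn_extend hJY).mono hIb, hIk⟩

theorem Submodule.finrank_add_finrank_le_finrank_inf_add (H W : Submodule K V) :
    finrank K H + finrank K W ≤ finrank K ↥(H ⊓ W) + finrank K V := by
  have := finrank_sup_add_finrank_inf_eq H W
  have := (H ⊔ W).finrank_le
  omega

theorem Submodule.exists_le_inf_eq_and_finrank_add_eq {F' S F : Submodule K V} (h₁ : F' ≤ S)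
    (h₂ : S ≤ F) :
    ∃ H ≤ F, H ⊓ S = F' ∧ finrank K H + finrank K S = finrank K F + finrank K F' := by
  obtain ⟨T, hT⟩ := S.exists_isCompl
  have hD : Disjoint S (T ⊓ F) := hT.disjoint.mono_right inf_le_left
  have hSD : S ⊔ T ⊓ F = F := by rw [← sup_inf_assoc_of_le _ h₂, hT.sup_eq_top, top_inf_eq]
  refine ⟨F' ⊔ T ⊓ F, sup_le (h₁.trans h₂) inf_le_right, ?_, ?_⟩
  · rw [sup_inf_assoc_of_le _ h₁, hD.symm.eq_bot, sup_bot_eq]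
  · have hF' := finrank_sup_add_finrank_inf_eq F' (T ⊓ F)
    have hS := finrank_sup_add_finrank_inf_eq S (T ⊓ F)
    rw [(hD.mono_left h₁).eq_bot, finrank_bot] at hF'
    rw [hSD, hD.eq_bot, finrank_bot] at hS
    omega

end LinearAlgebra

theorem relCritNum_add_finrank_le {n : ℕ} {R : Set (Fin n → ZMod 2)}
    (H : Submodule (ZMod 2) (Fin n → ZMod 2)) (hRH : ∀ x ∈ R, x ∉ H) :
    relCritNum R + finrank (ZMod 2) H ≤ n := by
  have hW := finrank_mono (inf_le_right : H ⊓ span (ZMod 2) R ≤ span (ZMod 2) R)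
  have hcrit : relCritNum R ≤ finrank (ZMod 2) (span (ZMod 2) R) -
      finrank (ZMod 2) ↥(H ⊓ span (ZMod 2) R) :=
    Nat.sInf_le ⟨H ⊓ span (ZMod 2) R, inf_le_right, by omega, fun x hx hxW => hRH x hx hxW.1⟩
  have := finrank_add_finrank_le_finrank_inf_add H (span (ZMod 2) R)
  rw [finrank_fin_fun] at this
  omega

theorem stmt_12_general (r c : ℕ) (Y : Set (Fin r → ZMod 2)) (hc : 2 ≤ c)
    (hspan : Submodule.span (ZMod 2) Y = ⊤)
    (hdel : ∀ I ⊆ Y,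
      LinearIndependent (ZMod 2) (fun x : I => (x : Fin r → ZMod 2)) →
      I.ncard = r - c + 1 → relCritNum (Y \ I) = c) :
    ¬ ∃ F : Submodule (ZMod 2) (Fin r → ZMod 2),
        Module.finrank (ZMod 2) F + (c - 2) = r ∧
        HasIndepHyperplane (Y ∩ ↑F) := by
  rintro ⟨F, hF, F', hF'S, hF'rank, hI₀⟩
  have hSF : span (ZMod 2) (Y ∩ ↑F) ≤ F := span_le.mpr Set.inter_subset_right
  have hSrank := finrank_mono hSF
  obtain ⟨H, hHF, hHS, hHrank⟩ := exists_le_inf_eq_and_finrank_add_eq hF'S hSF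
  have hI₀card := LinearIndepOn.ncard_le_finrank hI₀ Set.inter_subset_left
  obtain ⟨I, hI₀I, hIY, hI, hIcard⟩ := LinearIndepOn.exists_superset_subset_ncard_eq hI₀
    (fun x hx => hx.2.1) hspan (k := r - c + 1) (by omega) (by rw [finrank_fin_fun]; omega)
  have hHY : ∀ x ∈ Y \ I, x ∉ H := fun x hx hxH =>
    hx.2 (hI₀I ⟨hHS ▸ ⟨hxH, subset_span ⟨hx.1, hHF hxH⟩⟩, hx.1, hHF hxH⟩)
  have hcrit := relCritNum_add_finrank_le H hHY
  rw [hdel I hIY hI hIcard] at hcrit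
  omega

theorem stmt_12 (r c : ℕ) (Y : Set (Fin r → ZMod 2)) (hc : 2 ≤ c)
    (h0 : (0 : Fin r → ZMod 2) ∉ Y) (hspan : Submodule.span (ZMod 2) Y = ⊤)
    (hchi : critNum Y = c)
    (hdel : ∀ I ⊆ Y,
      LinearIndependent (ZMod 2) (fun x : I => (x : Fin r → ZMod 2)) →
      I.ncard = r - c + 1 → relCritNum (Y \ I) = c) :
    ¬ ∃ F : Submodule (ZMod 2) (Fin r → ZMod 2),
        Module.finrank (ZMod 2) F + (c - 2) = r ∧
        HasIndepHyperplane (Y ∩ ↑F) :=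
  stmt_12_general r c Y hc hspan hdel
end
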